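/- arXiv:1505.02030 — 3 statements merged into one kernel-verified Lean document; each statement's English description precedes it below -/
import Mathlib

section
/- Let ψ > 0, ρ > 0, 0 < ω < 1, and ρ > (√ψ + √(1−ω))². Then with Δ = (1 + (1−ω−ρ)/ψ)² − 4(1−ω)/ψ, the two numbers y_{B,C} = (1/2)((ρ+ω−1)/ψ − 1 ∓ √Δ) are real, distinct, and both strictly positive, and satisfy ρ y/(1+y) = ψ y + 1 − ω. -/
/-!
With `ν = ρ / ψ` and `β = (1 - ω) / ψ`, clearing the denominator turns the steady-state equation
into the monic quadratic `y² - s y + β = 0` with `s = ν - β - 1`, whose discriminant is `Δ`.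
The threshold `(√ψ + √(1 - ω))² < ρ` reads `(1 + √β)² < ν`, i.e. `2 √β < s`: the sum of the roots
is positive and `4 β < s²`, so the roots are real and distinct, and since their product `β` is
positive as well, both are positive.
-/

open Real

lemma one_add_sqrt_div_sq_lt_div {ψ b ρ : ℝ} (hψ : 0 < ψ) (h : (√ψ + √b) ^ 2 < ρ) :
    (1 + √(b / ψ)) ^ 2 < ρ / ψ := by
  have hsψ : √ψ ≠ 0 := (sqrt_pos.mpr hψ).ne'
  have hscale : (1 + √(b / ψ)) ^ 2 = (√ψ + √b) ^ 2 / ψ := by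
    rw [sqrt_div' b hψ.le, ← sq_sqrt hψ.le, sqrt_sq (sqrt_nonneg ψ), ← div_pow, add_div,
      div_self hsψ]
  rw [hscale]
  exact div_lt_div_of_pos_right h hψ

lemma sub_sub_one_pos_and_four_mul_lt_sq {β ν : ℝ} (hβ : 0 ≤ β) (h : (1 + √β) ^ 2 < ν) :
    0 < ν - β - 1 ∧ 4 * β < (ν - β - 1) ^ 2 := by
  have hgap : 2 * √β < ν - β - 1 := by nlinarith [sq_sqrt hβ]
  have hsq : 4 * β = (2 * √β) ^ 2 := by rw [mul_pow, sq_sqrt hβ]; norm_num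
  refine ⟨by linarith [sqrt_nonneg β], ?_⟩
  rw [hsq]
  exact pow_lt_pow_left₀ hgap (by positivity) two_ne_zero

lemma quadratic_root_of_sq_eq_discrim {s p e : ℝ} (he : e ^ 2 = s ^ 2 - 4 * p) :
    (1 / 2 * (s + e)) ^ 2 - s * (1 / 2 * (s + e)) + p = 0 := by
  linear_combination (1 / 4 : ℝ) * he

lemma quadratic_roots_pos {s p : ℝ} (hs : 0 < s) (hp : 0 < p) (hdisc : 4 * p < s ^ 2) :
    0 < s ^ 2 - 4 * p ∧ 0 < 1 / 2 * (s - √(s ^ 2 - 4 * p)) ∧ 0 < 1 / 2 * (s + √(s ^ 2 - 4 * p)) := by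
  have hlt : √(s ^ 2 - 4 * p) < s := (sqrt_lt' hs).mpr (by linarith)
  refine ⟨by linarith, by linarith, by positivity⟩

lemma mul_div_one_add_eq_of_quadratic {ψ ρ b y : ℝ} (hψ : ψ ≠ 0) (hy : 1 + y ≠ 0)
    (h : y ^ 2 - ((ρ - b) / ψ - 1) * y + b / ψ = 0) :
    ρ * y / (1 + y) = ψ * y + b := by
  rw [div_eq_iff hy]
  field_simp at h
  linear_combination -h

theorem stmt_7_general (ψ ρ ω : ℝ) (hψ : 0 < ψ) (hω1 : ω < 1)
    (hbig : ρ > (Real.sqrt ψ + Real.sqrt (1 - ω)) ^ 2) :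
    let Δ := (1 + (1 - ω - ρ) / ψ) ^ 2 - 4 * (1 - ω) / ψ
    let yB := (1 / 2) * ((ρ + ω - 1) / ψ - 1 - Real.sqrt Δ)
    let yC := (1 / 2) * ((ρ + ω - 1) / ψ - 1 + Real.sqrt Δ)
    0 < Δ ∧ yB ≠ yC ∧ 0 < yB ∧ 0 < yC ∧
      ρ * yB / (1 + yB) = ψ * yB + 1 - ω ∧
      ρ * yC / (1 + yC) = ψ * yC + 1 - ω := by
  intro Δ yB yC
  have hβ : 0 < (1 - ω) / ψ := div_pos (by linarith) hψ
  have hs : (ρ + ω - 1) / ψ - 1 = ρ / ψ - (1 - ω) / ψ - 1 := by ring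
  have hs' : (ρ + ω - 1) / ψ - 1 = (ρ - (1 - ω)) / ψ - 1 := by ring
  have hΔ : Δ = ((ρ + ω - 1) / ψ - 1) ^ 2 - 4 * ((1 - ω) / ψ) := by ring
  obtain ⟨hs_pos, hdisc⟩ :=
    sub_sub_one_pos_and_four_mul_lt_sq hβ.le (one_add_sqrt_div_sq_lt_div hψ hbig)
  rw [← hs] at hs_pos hdisc
  obtain ⟨hΔ_pos, hyB, hyC⟩ := quadratic_roots_pos hs_pos hβ hdisc
  rw [← hΔ] at hΔ_pos hyB hyC
  have hsqrt : √Δ ^ 2 = ((ρ + ω - 1) / ψ - 1) ^ 2 - 4 * ((1 - ω) / ψ) := by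
    rw [sq_sqrt hΔ_pos.le, hΔ]
  refine ⟨hΔ_pos, fun h => ?_, hyB, hyC, ?_, ?_⟩
  · simp only [yB, yC] at h
    linarith [sqrt_pos.mpr hΔ_pos]
  all_goals
    rw [add_sub_assoc]
    refine mul_div_one_add_eq_of_quadratic hψ.ne' (by positivity) ?_
    rw [← hs']
  · rw [sub_eq_add_neg]
    exact quadratic_root_of_sq_eq_discrim (by rw [neg_sq, hsqrt])
  · exact quadratic_root_of_sq_eq_discrim hsqrt

theorem stmt_7 (ψ ρ ω : ℝ) (hψ : 0 < ψ) (hρ : 0 < ρ) (hω0 : 0 < ω) (hω1 : ω < 1)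
    (hbig : ρ > (Real.sqrt ψ + Real.sqrt (1 - ω)) ^ 2) :
    let Δ := (1 + (1 - ω - ρ) / ψ) ^ 2 - 4 * (1 - ω) / ψ
    let yB := (1 / 2) * ((ρ + ω - 1) / ψ - 1 - Real.sqrt Δ)
    let yC := (1 / 2) * ((ρ + ω - 1) / ψ - 1 + Real.sqrt Δ)
    0 < Δ ∧ yB ≠ yC ∧ 0 < yB ∧ 0 < yC ∧
      ρ * yB / (1 + yB) = ψ * yB + 1 - ω ∧
      ρ * yC / (1 + yC) = ψ * yC + 1 - ω :=
  stmt_7_general ψ ρ ω hψ hω1 hbig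
end

section
/- Let d, ω, ζ > 0, ψ ≥ 0, γ > 0 with ψ > γ. Then the equation θ⁴ + d(2ψζ + dω²)θ² + d²ζ²(ψ² − γ²) = 0 has no real solution θ ≠ 0, and hence the characteristic quasi-polynomial W(λ) = λ² + dωλ − dψζ + dζγe^{−λτ} has no purely imaginary roots for any τ ≥ 0. -/
/-! At `λ = iθ` the delay term `r e^{-iθτ}` has modulus `|r|`, so a purely imaginary root
forces `|θ² + q - i p θ| = |r|`, i.e. `(θ² + q)² + (pθ)² = r²`. For the tumour–immune
parameters this says that `θ` is a root of the quartic, whose coefficients are all positive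
once `ψ > γ`. -/

open Complex

theorem sq_add_sq_eq_sq_of_imaginary_root {p q r τ θ : ℝ}
    (h : (I * θ) ^ 2 + (p : ℂ) * (I * θ) - (q : ℂ) + (r : ℂ) * exp (-(I * θ) * (τ : ℝ)) = 0) :
    (θ ^ 2 + q) ^ 2 + (p * θ) ^ 2 = r ^ 2 := by
  have hdelay :
      (r : ℂ) * exp (-(I * θ) * (τ : ℝ)) = ((θ ^ 2 + q : ℝ) : ℂ) + ((-(p * θ) : ℝ) : ℂ) * I := by
    push_cast
    linear_combination h - θ ^ 2 * I_sq
  have hunit : ‖exp (-(I * θ) * (τ : ℝ))‖ = 1 := by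
    rw [show -(I * θ) * (τ : ℝ) = ((-(θ * τ) : ℝ) : ℂ) * I by push_cast; ring]
    exact norm_exp_ofReal_mul_I _
  have hnormSq := congrArg normSq hdelay
  rw [normSq_add_mul_I, map_mul, normSq_ofReal, normSq_eq_norm_sq, hunit] at hnormSq
  linear_combination -hnormSq

theorem stmt_9_general (d ω ζ ψ γ : ℝ) (hd : 0 < d) (hζ : 0 < ζ)
    (hγ : 0 < γ) (hψγ : ψ > γ) :
    (∀ θ : ℝ, θ ≠ 0 →
      θ ^ 4 + d * (2 * ψ * ζ + d * ω ^ 2) * θ ^ 2 + d ^ 2 * ζ ^ 2 * (ψ ^ 2 - γ ^ 2) ≠ 0) ∧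
    (∀ τ : ℝ, 0 ≤ τ → ∀ θ : ℝ, θ ≠ 0 →
      (Complex.I * θ) ^ 2 + (d * ω : ℝ) * (Complex.I * θ) - (d * ψ * ζ : ℝ)
        + (d * ζ * γ : ℝ) * Complex.exp (-(Complex.I * θ) * (τ : ℝ)) ≠ 0) := by
  have hquartic (θ : ℝ) :
      0 < θ ^ 4 + d * (2 * ψ * ζ + d * ω ^ 2) * θ ^ 2 + d ^ 2 * ζ ^ 2 * (ψ ^ 2 - γ ^ 2) := by
    have hψ : 0 < ψ := hγ.trans hψγ
    have hsq : 0 < ψ ^ 2 - γ ^ 2 := by nlinarith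
    positivity
  refine ⟨fun θ _ => (hquartic θ).ne', fun τ _ θ _ hroot => (hquartic θ).ne' ?_⟩
  linear_combination sq_add_sq_eq_sq_of_imaginary_root hroot

theorem stmt_9 (d ω ζ ψ γ : ℝ) (hd : 0 < d) (hω : 0 < ω) (hζ : 0 < ζ)
    (hψ : 0 ≤ ψ) (hγ : 0 < γ) (hψγ : ψ > γ) :
    (∀ θ : ℝ, θ ≠ 0 →
      θ ^ 4 + d * (2 * ψ * ζ + d * ω ^ 2) * θ ^ 2 + d ^ 2 * ζ ^ 2 * (ψ ^ 2 - γ ^ 2) ≠ 0) ∧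
    (∀ τ : ℝ, 0 ≤ τ → ∀ θ : ℝ, θ ≠ 0 →
      (Complex.I * θ) ^ 2 + (d * ω : ℝ) * (Complex.I * θ) - (d * ψ * ζ : ℝ)
        + (d * ζ * γ : ℝ) * Complex.exp (-(Complex.I * θ) * (τ : ℝ)) ≠ 0) :=
  stmt_9_general d ω ζ ψ γ hd hζ hγ hψγ
end

section
/- Let d, ω, ζ, γ > 0, ψ ≥ 0 with ψ < γ, and let η = (−(2dζψ + (dω)²) + √((dω)⁴ + 4d³ζψω² + 4(dζγ)²))/2 and θ̄ = √η. Then 0 < θ̄² + dψζ < dζγ, so that cos(θ̄τ) = (θ̄² + dψζ)/(dζγ) ∈ (0,1) is solvable for τ. -/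
/-!
η is the positive root of `p(x) = x² + A x + C` with `A = 2dζψ + (dω)²` and
`C = (dζ)²(ψ² - γ²) < 0`, so `η > 0`. Since `p(dζ(γ - ψ)) = dζ(γ - ψ)(dω)² > 0` and `p`
increases on `[0, ∞)`, also `η < dζ(γ - ψ)`, i.e. `θ² + dψζ < dζγ`; then `arccos` gives `τ`.
-/

namespace Real

lemma neg_add_sqrt_discrim_div_two_pos {A C : ℝ} (hC : C < 0) :
    0 < (-A + √(A ^ 2 - 4 * C)) / 2 := by
  have : A < √(A ^ 2 - 4 * C) :=
    calc A ≤ |A| := le_abs_self A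
      _ = √(A ^ 2) := (sqrt_sq_eq_abs A).symm
      _ < √(A ^ 2 - 4 * C) := sqrt_lt_sqrt (sq_nonneg A) (by linarith)
  linarith

lemma neg_add_sqrt_discrim_div_two_lt {A C x : ℝ} (hx : 0 < 2 * x + A)
    (hp : 0 < x ^ 2 + A * x + C) : (-A + √(A ^ 2 - 4 * C)) / 2 < x := by
  have : √(A ^ 2 - 4 * C) < 2 * x + A := (sqrt_lt' hx).2 (by nlinarith)
  linarith

lemma exists_cos_mul_eq {θ c : ℝ} (hθ : θ ≠ 0) (hc₀ : -1 ≤ c) (hc₁ : c ≤ 1) :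
    ∃ τ, cos (θ * τ) = c :=
  ⟨arccos c / θ, by rw [mul_div_cancel₀ _ hθ, cos_arccos hc₀ hc₁]⟩

end Real

theorem stmt_13_general (d ω ζ γ ψ : ℝ) (hd : 0 < d) (hω : 0 < ω) (hζ : 0 < ζ)
    (hψ : 0 ≤ ψ) (hψγ : ψ < γ) :
    let η := (-(2 * d * ζ * ψ + (d * ω) ^ 2) +
      Real.sqrt ((d * ω) ^ 4 + 4 * d ^ 3 * ζ * ψ * ω ^ 2 + 4 * (d * ζ * γ) ^ 2)) / 2
    let θ := Real.sqrt η
    0 < θ ^ 2 + d * ψ * ζ ∧ θ ^ 2 + d * ψ * ζ < d * ζ * γ ∧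
      ∃ τ : ℝ, Real.cos (θ * τ) = (θ ^ 2 + d * ψ * ζ) / (d * ζ * γ) := by
  intro η θ
  have hgap : 0 < γ - ψ := sub_pos.mpr hψγ
  have hdisc : (d * ω) ^ 4 + 4 * d ^ 3 * ζ * ψ * ω ^ 2 + 4 * (d * ζ * γ) ^ 2 =
      (2 * d * ζ * ψ + (d * ω) ^ 2) ^ 2 - 4 * ((d * ζ) ^ 2 * (ψ ^ 2 - γ ^ 2)) := by ring
  have hη_pos : 0 < η := by
    simp only [η, hdisc]
    exact Real.neg_add_sqrt_discrim_div_two_pos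
      (mul_neg_of_pos_of_neg (by positivity) (by nlinarith))
  have hη_lt : η < d * ζ * (γ - ψ) := by
    simp only [η, hdisc]
    apply Real.neg_add_sqrt_discrim_div_two_lt
    · positivity
    · rw [show (d * ζ * (γ - ψ)) ^ 2 + (2 * d * ζ * ψ + (d * ω) ^ 2) * (d * ζ * (γ - ψ)) +
          (d * ζ) ^ 2 * (ψ ^ 2 - γ ^ 2) = d * ζ * (γ - ψ) * (d * ω) ^ 2 by ring]
      positivity
  have hθ : θ ^ 2 = η := Real.sq_sqrt hη_pos.le
  have hlow : 0 < θ ^ 2 + d * ψ * ζ := by rw [hθ]; positivity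
  have hup : θ ^ 2 + d * ψ * ζ < d * ζ * γ := by
    rw [hθ]; linarith [show d * ζ * (γ - ψ) = d * ζ * γ - d * ψ * ζ by ring]
  have hden : 0 < d * ζ * γ := mul_pos (mul_pos hd hζ) (by linarith)
  refine ⟨hlow, hup, Real.exists_cos_mul_eq (Real.sqrt_pos.2 hη_pos).ne' ?_ ?_⟩
  · linarith [div_pos hlow hden]
  · exact (div_lt_one hden).2 hup |>.le

theorem stmt_13 (d ω ζ γ ψ : ℝ) (hd : 0 < d) (hω : 0 < ω) (hζ : 0 < ζ)
    (hγ : 0 < γ) (hψ : 0 ≤ ψ) (hψγ : ψ < γ) :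
    let η := (-(2 * d * ζ * ψ + (d * ω) ^ 2) +
      Real.sqrt ((d * ω) ^ 4 + 4 * d ^ 3 * ζ * ψ * ω ^ 2 + 4 * (d * ζ * γ) ^ 2)) / 2
    let θ := Real.sqrt η
    0 < θ ^ 2 + d * ψ * ζ ∧ θ ^ 2 + d * ψ * ζ < d * ζ * γ ∧
      ∃ τ : ℝ, Real.cos (θ * τ) = (θ ^ 2 + d * ψ * ζ) / (d * ζ * γ) :=
  stmt_13_general d ω ζ γ ψ hd hω hζ hψ hψγ
end
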